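/- arXiv:2311.08570 — 2 statements merged into one kernel-verified Lean document; each statement's English description precedes it below -/
import Mathlib

section
/- Let G = (V, E) be a hypergraph. Then the intersection of the projected relaxations P_E(D) over all recursive McCormick linearizations D of G is contained in flowerRel(G). -/
open Finset

/-- A set `I` is a singleton `{v}`. -/
def IsSingleton {V : Type} (I : Finset V) : Prop := ∃ v : V, I = {v}

instance {V : Type} [DecidableEq V] [Fintype V] (I : Finset V) :
    Decidable (IsSingleton I) :=
  inferInstanceAs (Decidable (∃ v : V, I = {v}))

/-- The successors of node `I` in the arc set `A`. -/
def succOf {V : Type} [DecidableEq V] (A : Finset (Finset V × Finset V))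
    (I : Finset V) : Finset (Finset V) :=
  (A.filter fun a => a.1 = I).image Prod.snd

/-- A recursive linearization over the finite ground set `V`: a simple digraph whose
nodes are nonempty subsets of `V` including all singletons, where each arc goes from a
set to a subset, and the successors of every non-singleton node cover it. -/
structure RecLin (V : Type) [Fintype V] [DecidableEq V] where
  nodes : Finset (Finset V)
  arcs : Finset (Finset V × Finset V)
  arcs_fst_mem : ∀ a ∈ arcs, a.1 ∈ nodes
  arcs_snd_mem : ∀ a ∈ arcs, a.2 ∈ nodes
  no_loops : ∀ a ∈ arcs, a.1 ≠ a.2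
  singleton_mem : ∀ v : V, ({v} : Finset V) ∈ nodes
  nodes_nonempty : ∀ I ∈ nodes, I.Nonempty
  arcs_subset : ∀ a ∈ arcs, a.2 ⊆ a.1
  succ_union : ∀ I ∈ nodes, ¬ IsSingleton I → (succOf arcs I).biUnion id = I

/-- The relaxation `P(D)` of a recursive linearization, as a subset of `ℝ^{Finset V}`
constraining only the coordinates indexed by nodes of `D`. -/
def relax {V : Type} [Fintype V] [DecidableEq V] (D : RecLin V) :
    Set (Finset V → ℝ) :=
  { z | (∀ I ∈ D.nodes, 0 ≤ z I ∧ z I ≤ 1)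
      ∧ (∀ a ∈ D.arcs, z a.1 ≤ z a.2)
      ∧ (∀ I ∈ D.nodes, ¬ IsSingleton I →
          z I + ∑ J ∈ succOf D.arcs I, (1 - z J) ≥ 1) }

/-- The projected relaxation `P_T(D)`: the orthogonal projection of `P(D)` onto the
coordinates indexed by `T ∪ S` (`S` = singletons). -/
def projRelax {V : Type} [Fintype V] [DecidableEq V] (D : RecLin V)
    (T : Finset (Finset V)) : Set (Finset V → ℝ) :=
  { z | ∃ w ∈ relax D, ∀ I : Finset V, (I ∈ T ∨ IsSingleton I) → w I = z I }

/-- `D` is a recursive linearization of the hypergraph `G = (V, E)`. -/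
def RecLinOf {V : Type} [Fintype V] [DecidableEq V] (D : RecLin V)
    (E : Finset (Finset V)) : Prop :=
  E ⊆ D.nodes ∧ ∀ I ∈ D.nodes, (∀ a ∈ D.arcs, a.2 ≠ I) → (I ∈ E ∨ IsSingleton I)

/-- `D` is partitioning: the successors of every node are pairwise disjoint. -/
def Partitioning {V : Type} [Fintype V] [DecidableEq V] (D : RecLin V) : Prop :=
  ∀ I ∈ D.nodes, ∀ J ∈ succOf D.arcs I, ∀ J' ∈ succOf D.arcs I, J ≠ J' → J ∩ J' = ∅

/-- `D` is binary: every non-singleton node has exactly two successors. -/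
def Binary {V : Type} [Fintype V] [DecidableEq V] (D : RecLin V) : Prop :=
  ∀ I ∈ D.nodes, ¬ IsSingleton I → (succOf D.arcs I).card = 2

/-- A recursive McCormick linearization is partitioning and binary. -/
def McCormick {V : Type} [Fintype V] [DecidableEq V] (D : RecLin V) : Prop :=
  Partitioning D ∧ Binary D

/-- The extended flower relaxation of the hypergraph `G = (V, E)`, as a subset of
`ℝ^{Finset V}` constraining only the coordinates indexed by `E ∪ S`. -/
def flowerRel {V : Type} [Fintype V] [DecidableEq V] (E : Finset (Finset V)) :
    Set (Finset V → ℝ) :=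
  { z | (∀ I : Finset V, (I ∈ E ∨ IsSingleton I) → 0 ≤ z I ∧ z I ≤ 1)
      ∧ (∀ I ∈ E, ∀ v ∈ I, z I ≤ z {v})
      ∧ (∀ I ∈ E, ∀ k : ℕ, ∀ J : Fin k → Finset V,
          (∀ i, J i ∈ E ∨ IsSingleton (J i)) →
          I ⊆ Finset.univ.biUnion J →
          (∀ i, (J i ∩ I).Nonempty) →
          z I + ∑ i, (1 - z (J i)) ≥ 1) }

/-- The multilinear polytope `ML(G)`: the convex hull of the 0/1 points whose
`E`-coordinates are the products of the corresponding singleton coordinates. -/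
def ML {V : Type} [Fintype V] [DecidableEq V] (E : Finset (Finset V)) :
    Set (Finset V → ℝ) :=
  convexHull ℝ { z : Finset V → ℝ |
    (∀ I : Finset V, (I ∈ E ∨ IsSingleton I) → z I = 0 ∨ z I = 1)
    ∧ ∀ I ∈ E, z I = ∏ v ∈ I, z {v} }

namespace FlowerAux

variable {V : Type} [Fintype V] [DecidableEq V]

/-- The descendants of a set under a splitting rule `f`. -/
def desc (f : Finset V → Finset (Finset V)) (hsub : ∀ A B, B ∈ f A → B ⊂ A)
    (A : Finset V) : Finset (Finset V) :=
  if 2 ≤ A.card then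
    insert A ((f A).attach.biUnion (fun B => desc f hsub B.1))
  else {A}
termination_by A.card
decreasing_by exact Finset.card_lt_card (hsub _ _ B.2)

variable {f : Finset V → Finset (Finset V)} {hsub : ∀ A B, B ∈ f A → B ⊂ A}

lemma self_mem_desc (A : Finset V) : A ∈ desc f hsub A := by
  rw [desc]; split <;> simp

lemma mem_desc_of_mem_f {A B C : Finset V} (h2 : 2 ≤ A.card) (hB : B ∈ f A)
    (hC : C ∈ desc f hsub B) : C ∈ desc f hsub A := by
  rw [desc, if_pos h2]
  exact Finset.mem_insert_of_mem (Finset.mem_biUnion.mpr ⟨⟨B, hB⟩, Finset.mem_attach _ _, hC⟩)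

lemma desc_cases {A C : Finset V} (hC : C ∈ desc f hsub A) :
    C = A ∨ (2 ≤ A.card ∧ ∃ B ∈ f A, C ∈ desc f hsub B) := by
  rw [desc] at hC
  split at hC
  · rcases Finset.mem_insert.mp hC with h | h
    · exact Or.inl h
    · rcases Finset.mem_biUnion.mp h with ⟨⟨B, hB⟩, -, hCB⟩
      exact Or.inr ⟨by assumption, B, hB, hCB⟩
  · exact Or.inl (Finset.mem_singleton.mp hC)

lemma desc_subset {A C : Finset V} (hC : C ∈ desc f hsub A) : C ⊆ A := by
  induction A using Finset.strongInduction generalizing C with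
  | _ A ih =>
    rcases desc_cases hC with rfl | ⟨-, B, hB, hCB⟩
    · exact subset_rfl
    · exact (ih B (hsub A B hB) hCB).trans (hsub A B hB).subset

lemma desc_closed {A B C : Finset V} (hB : B ∈ desc f hsub A) (h2 : 2 ≤ B.card)
    (hC : C ∈ f B) : C ∈ desc f hsub A := by
  induction A using Finset.strongInduction with
  | _ A ih =>
    rcases desc_cases hB with rfl | ⟨hA2, B', hB', hBB'⟩
    · exact mem_desc_of_mem_f h2 hC (self_mem_desc C)
    · exact mem_desc_of_mem_f hA2 hB' (ih B' (hsub A B' hB') hBB')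

lemma desc_pred {A C : Finset V} (hC : C ∈ desc f hsub A) :
    C = A ∨ ∃ B ∈ desc f hsub A, 2 ≤ B.card ∧ C ∈ f B := by
  induction A using Finset.strongInduction generalizing C with
  | _ A ih =>
    rcases desc_cases hC with rfl | ⟨hA2, B, hB, hCB⟩
    · exact Or.inl rfl
    · right
      rcases ih B (hsub A B hB) hCB with rfl | ⟨B', hB', h2', hCB'⟩
      · exact ⟨A, self_mem_desc A, hA2, hB⟩
      · exact ⟨B', mem_desc_of_mem_f hA2 hB hB', h2', hCB'⟩

end FlowerAux
namespace FlowerAux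

set_option linter.unusedSectionVars false

variable {V : Type} [Fintype V] [DecidableEq V]

variable (f : Finset V → Finset (Finset V)) (hsub : ∀ A B, B ∈ f A → B ⊂ A)

def mkNodes (E : Finset (Finset V)) : Finset (Finset V) :=
  (E ∪ Finset.univ.image (fun v : V => ({v} : Finset V))).biUnion (desc f hsub)

def mkArcs (E : Finset (Finset V)) : Finset (Finset V × Finset V) :=
  (mkNodes f hsub E).biUnion (fun A =>
    if 2 ≤ A.card then (f A).image (fun B => (A, B)) else ∅)

variable {f} {hsub}

lemma mem_mkArcs {E : Finset (Finset V)} {a : Finset V × Finset V} :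
    a ∈ mkArcs f hsub E ↔ a.1 ∈ mkNodes f hsub E ∧ 2 ≤ a.1.card ∧ a.2 ∈ f a.1 := by
  unfold mkArcs
  rw [Finset.mem_biUnion]
  constructor
  · rintro ⟨A, hA, ha⟩
    split at ha
    · rcases Finset.mem_image.mp ha with ⟨B, hB, rfl⟩
      exact ⟨hA, by assumption, hB⟩
    · simp at ha
  · rintro ⟨h1, h2, h3⟩
    exact ⟨a.1, h1, by rw [if_pos h2]; exact Finset.mem_image.mpr ⟨a.2, h3, rfl⟩⟩

lemma mkNodes_closed {E : Finset (Finset V)} {A B : Finset V}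
    (hA : A ∈ mkNodes f hsub E) (h2 : 2 ≤ A.card) (hB : B ∈ f A) :
    B ∈ mkNodes f hsub E := by
  rcases Finset.mem_biUnion.mp hA with ⟨r, hr, hAr⟩
  exact Finset.mem_biUnion.mpr ⟨r, hr, desc_closed hAr h2 hB⟩

lemma mem_mkNodes_of_mem_E {E : Finset (Finset V)} {A : Finset V} (hA : A ∈ E) :
    A ∈ mkNodes f hsub E :=
  Finset.mem_biUnion.mpr ⟨A, Finset.mem_union_left _ hA, self_mem_desc A⟩

lemma singleton_mem_mkNodes {E : Finset (Finset V)} (v : V) :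
    ({v} : Finset V) ∈ mkNodes f hsub E :=
  Finset.mem_biUnion.mpr
    ⟨{v}, Finset.mem_union_right _ (Finset.mem_image.mpr ⟨v, Finset.mem_univ v, rfl⟩),
      self_mem_desc _⟩

lemma succOf_mkArcs {E : Finset (Finset V)} {A : Finset V}
    (hA : A ∈ mkNodes f hsub E) (h2 : 2 ≤ A.card) :
    succOf (mkArcs f hsub E) A = f A := by
  ext B
  unfold succOf
  rw [Finset.mem_image]
  constructor
  · rintro ⟨a, ha, rfl⟩
    rw [Finset.mem_filter] at ha
    rcases ha with ⟨ha, rfl⟩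
    exact (mem_mkArcs.mp ha).2.2
  · intro hB
    exact ⟨(A, B), Finset.mem_filter.mpr ⟨mem_mkArcs.mpr ⟨hA, h2, hB⟩, rfl⟩, rfl⟩

lemma succOf_mkArcs_small {E : Finset (Finset V)} {A : Finset V}
    (h2 : ¬ 2 ≤ A.card) : succOf (mkArcs f hsub E) A = ∅ := by
  ext B
  unfold succOf
  simp only [Finset.mem_image, Finset.mem_filter, Finset.notMem_empty, iff_false]
  rintro ⟨a, ⟨ha, rfl⟩, rfl⟩
  exact h2 (mem_mkArcs.mp ha).2.1

lemma not_isSingleton_iff {A : Finset V} (hne : A.Nonempty) :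
    ¬ IsSingleton A ↔ 2 ≤ A.card := by
  constructor
  · intro h
    by_contra h1
    push_neg at h1
    interval_cases h' : A.card
    · exact absurd (Finset.card_eq_zero.mp h') hne.ne_empty
    · rcases Finset.card_eq_one.mp h' with ⟨v, rfl⟩
      exact h ⟨v, rfl⟩
  · rintro h ⟨v, rfl⟩
    simp at h

section WithCover

variable (hcover : ∀ A : Finset V, 2 ≤ A.card →
    (f A).biUnion id = A ∧ (f A).card = 2 ∧
    ∀ B ∈ f A, ∀ B' ∈ f A, B ≠ B' → B ∩ B' = ∅)

include hsub hcover

lemma f_part_nonempty {A B : Finset V} (h2 : 2 ≤ A.card) (hB : B ∈ f A) :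
    B.Nonempty := by
  rw [Finset.nonempty_iff_ne_empty]
  rintro rfl
  obtain ⟨hu, hc, -⟩ := hcover A h2
  rcases Finset.card_eq_two.mp hc with ⟨B, C, hBC, hfA⟩
  rw [hfA] at hB hu
  have : B = ∅ ∨ C = ∅ := by
    rcases Finset.mem_insert.mp hB with h | h
    · exact Or.inl h.symm
    · exact Or.inr (Finset.mem_singleton.mp h).symm
  have hA : B ∪ C = A := by
    rw [← hu]; ext x; simp [Finset.mem_biUnion]
  rcases this with rfl | rfl
  · have : C ⊂ A := hsub A C (by rw [hfA]; simp)
    simp at hA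
    exact this.ne hA
  · have : B ⊂ A := hsub A B (by rw [hfA]; simp)
    simp at hA
    exact this.ne hA

lemma desc_nonempty {A B : Finset V} (hA : A.Nonempty) (hB : B ∈ desc f hsub A) :
    B.Nonempty := by
  induction A using Finset.strongInduction generalizing B with
  | _ A ih =>
    rcases desc_cases hB with rfl | ⟨h2, C, hC, hBC⟩
    · exact hA
    · exact ih C (hsub A C hC) (f_part_nonempty (hsub := hsub) hcover h2 hC) hBC

lemma mkNodes_nonempty {E : Finset (Finset V)} (hE : ∀ I ∈ E, 2 ≤ I.card)
    {A : Finset V} (hA : A ∈ mkNodes f hsub E) : A.Nonempty := by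
  rcases Finset.mem_biUnion.mp hA with ⟨r, hr, hAr⟩
  have hrne : r.Nonempty := by
    rcases Finset.mem_union.mp hr with h | h
    · exact Finset.card_pos.mp (by have := hE r h; omega)
    · rcases Finset.mem_image.mp h with ⟨v, -, rfl⟩
      exact Finset.singleton_nonempty v
  exact desc_nonempty hcover hrne hAr

variable (f hsub)

def mkD (E : Finset (Finset V)) (hE : ∀ I ∈ E, 2 ≤ I.card) : RecLin V where
  nodes := mkNodes f hsub E
  arcs := mkArcs f hsub E
  arcs_fst_mem := fun _ ha => (mem_mkArcs.mp ha).1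
  arcs_snd_mem := fun _ ha =>
    mkNodes_closed (mem_mkArcs.mp ha).1 (mem_mkArcs.mp ha).2.1 (mem_mkArcs.mp ha).2.2
  no_loops := fun a ha => fun h =>
    (hsub a.1 a.2 (mem_mkArcs.mp ha).2.2).ne h.symm
  singleton_mem := fun v => singleton_mem_mkNodes v
  nodes_nonempty := fun _ hI => mkNodes_nonempty hcover hE hI
  arcs_subset := fun a ha => (hsub a.1 a.2 (mem_mkArcs.mp ha).2.2).subset
  succ_union := by
    intro I hI hns
    have h2 : 2 ≤ I.card :=
      (not_isSingleton_iff (mkNodes_nonempty hcover hE hI)).mp hns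
    rw [succOf_mkArcs hI h2]
    exact (hcover I h2).1

variable {f hsub}

lemma mkD_nodes {E : Finset (Finset V)} (hE : ∀ I ∈ E, 2 ≤ I.card) :
    (mkD f hsub hcover E hE).nodes = mkNodes f hsub E := rfl

lemma mkD_arcs {E : Finset (Finset V)} (hE : ∀ I ∈ E, 2 ≤ I.card) :
    (mkD f hsub hcover E hE).arcs = mkArcs f hsub E := rfl

lemma mkD_recLinOf {E : Finset (Finset V)} (hE : ∀ I ∈ E, 2 ≤ I.card) :
    RecLinOf (mkD f hsub hcover E hE) E := by
  constructor
  · intro A hA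
    exact mem_mkNodes_of_mem_E hA
  · intro I hI hnopred
    rw [mkD_nodes] at hI
    simp only [mkD_arcs] at hnopred
    rcases Finset.mem_biUnion.mp hI with ⟨r, hr, hIr⟩
    rcases desc_pred hIr with rfl | ⟨B, hB, h2, hIB⟩
    · rcases Finset.mem_union.mp hr with h | h
      · exact Or.inl h
      · rcases Finset.mem_image.mp h with ⟨v, -, rfl⟩
        exact Or.inr ⟨v, rfl⟩
    · exfalso
      refine hnopred (B, I) (mem_mkArcs.mpr ⟨?_, h2, hIB⟩) rfl
      exact Finset.mem_biUnion.mpr ⟨r, hr, hB⟩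

lemma mkD_mcCormick {E : Finset (Finset V)} (hE : ∀ I ∈ E, 2 ≤ I.card) :
    McCormick (mkD f hsub hcover E hE) := by
  constructor
  · intro I hI J hJ J' hJ' hne
    rw [mkD_nodes] at hI
    rw [mkD_arcs] at hJ hJ'
    by_cases h2 : 2 ≤ I.card
    · rw [succOf_mkArcs hI h2] at hJ hJ'
      exact (hcover I h2).2.2 J hJ J' hJ' hne
    · rw [succOf_mkArcs_small h2] at hJ
      simp at hJ
  · intro I hI hns
    rw [mkD_nodes] at hI
    have h2 : 2 ≤ I.card :=
      (not_isSingleton_iff (mkNodes_nonempty hcover hE hI)).mp hns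
    rw [mkD_arcs, succOf_mkArcs hI h2]
    exact (hcover I h2).2.1

end WithCover

/-- Monotonicity along any recursive linearization. -/
lemma relax_mono {D : RecLin V} {w : Finset V → ℝ} (hw : w ∈ relax D)
    {I : Finset V} (hI : I ∈ D.nodes) {v : V} (hv : v ∈ I) : w I ≤ w {v} := by
  induction I using Finset.strongInduction with
  | _ I ih =>
    by_cases hs : IsSingleton I
    · rcases hs with ⟨u, rfl⟩
      rw [Finset.mem_singleton] at hv
      subst hv
      exact le_refl _
    · have hcov := D.succ_union I hI hs
      have hv' : v ∈ (succOf D.arcs I).biUnion id := by rw [hcov]; exact hv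
      rcases Finset.mem_biUnion.mp hv' with ⟨J, hJ, hvJ⟩
      rcases Finset.mem_image.mp hJ with ⟨a, ha, rfl⟩
      rw [Finset.mem_filter] at ha
      rcases ha with ⟨ha, hfst⟩
      have hJI : a.2 ⊂ I := by
        refine lt_of_le_of_ne (hfst ▸ D.arcs_subset a ha) ?_
        intro h
        exact D.no_loops a ha (by rw [hfst, h])
      have harc : w I ≤ w a.2 := hfst ▸ hw.2.1 a ha
      exact le_trans harc (ih a.2 hJI (D.arcs_snd_mem a ha) hvJ)

end FlowerAux
namespace FlowerAux

set_option linter.unusedSectionVars false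
set_option maxHeartbeats 1000000

section Flower

variable {V : Type} [Fintype V] [DecidableEq V] [LinearOrder V]
variable (I : Finset V) (k : ℕ) (J : Fin k → Finset V)

/-- The spine sets. -/
def Rt (t : ℕ) : Finset V :=
  I \ (Finset.univ.filter fun j : Fin k => (j : ℕ) < t).biUnion J

/-- The blocks. -/
def Kt (t : ℕ) : Finset V := Rt I k J t \ Rt I k J (t + 1)

variable {I k J}

lemma mem_Rt {x : V} {t : ℕ} :
    x ∈ Rt I k J t ↔ x ∈ I ∧ ∀ j : Fin k, (j : ℕ) < t → x ∉ J j := by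
  simp only [Rt, Finset.mem_sdiff, Finset.mem_biUnion, Finset.mem_filter,
    Finset.mem_univ, true_and]
  push_neg
  tauto

lemma Rt_zero : Rt I k J 0 = I := by
  ext x; rw [mem_Rt]; simp

lemma Rt_anti {s t : ℕ} (h : s ≤ t) : Rt I k J t ⊆ Rt I k J s := by
  intro x hx
  rw [mem_Rt] at hx ⊢
  exact ⟨hx.1, fun j hj => hx.2 j (lt_of_lt_of_le hj h)⟩

lemma Kt_subset_Rt {t : ℕ} : Kt I k J t ⊆ Rt I k J t := Finset.sdiff_subset

lemma Kt_union {t : ℕ} : Kt I k J t ∪ Rt I k J (t + 1) = Rt I k J t :=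
  Finset.sdiff_union_of_subset (Rt_anti (Nat.le_succ t))

lemma notMem_Rt_of_mem_Kt {x : V} {t : ℕ} (h : x ∈ Kt I k J t) :
    x ∉ Rt I k J (t + 1) := (Finset.mem_sdiff.mp h).2

lemma Kt_empty_iff {t : ℕ} : Kt I k J t = ∅ ↔ Rt I k J (t + 1) = Rt I k J t := by
  constructor
  · intro h
    refine subset_antisymm (Rt_anti (Nat.le_succ t)) ?_
    intro x hx
    by_contra hx'
    exact Finset.notMem_empty x (h ▸ Finset.mem_sdiff.mpr ⟨hx, hx'⟩)
  · intro h
    rw [Kt, h, Finset.sdiff_self]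

lemma Kt_subset_J {j : Fin k} : Kt I k J (j : ℕ) ⊆ J j := by
  intro x hx
  rcases Finset.mem_sdiff.mp hx with ⟨hx1, hx2⟩
  rw [mem_Rt] at hx1 hx2
  push_neg at hx2
  rcases hx2 hx1.1 with ⟨i, hi, hxi⟩
  have : (i : ℕ) = (j : ℕ) := by
    have h2 : ¬ ((i : ℕ) < (j : ℕ)) := fun hlt => hx1.2 i hlt hxi
    omega
  rwa [← Fin.ext_iff.mpr this]

lemma notMem_J_of_mem_Rt {x : V} {t : ℕ} {j : Fin k} (hj : (j : ℕ) < t)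
    (hx : x ∈ Rt I k J t) : x ∉ J j := (mem_Rt.mp hx).2 j hj

lemma Rt_k_empty (hcov : I ⊆ Finset.univ.biUnion J) : Rt I k J k = ∅ := by
  ext x
  simp only [Finset.notMem_empty, iff_false]
  intro hx
  rw [mem_Rt] at hx
  rcases Finset.mem_biUnion.mp (hcov hx.1) with ⟨j, -, hxj⟩
  exact hx.2 j j.isLt hxj

lemma lt_k_of_Rt_succ_nonempty (hcov : I ⊆ Finset.univ.biUnion J) {t : ℕ}
    (h : (Rt I k J (t + 1)).Nonempty) : t < k := by
  by_contra h'
  push_neg at h'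
  rcases h with ⟨x, hx⟩
  have : x ∈ Rt I k J k := Rt_anti (by omega) hx
  rw [Rt_k_empty hcov] at this
  exact Finset.notMem_empty x this

/-- Rule-1 predicate. -/
def P1 (A : Finset V) (t : Fin k) : Prop :=
  Rt I k J (t : ℕ) = A ∧ (Kt I k J (t : ℕ)).Nonempty ∧ (Rt I k J ((t : ℕ) + 1)).Nonempty

/-- Rule-2 predicate. -/
def P2 (A : Finset V) (j : Fin k) : Prop :=
  J j = A ∧ (Kt I k J (j : ℕ)).Nonempty ∧ Kt I k J (j : ℕ) ⊂ A

lemma P1_aux {A : Finset V} {t t' : Fin k} (h : P1 (I := I) (J := J) A t)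
    (h' : P1 (I := I) (J := J) A t') (hlt : (t : ℕ) < (t' : ℕ)) : False := by
  have h1 : Rt I k J (t' : ℕ) ⊆ Rt I k J ((t : ℕ) + 1) := Rt_anti (by omega)
  have h2 : Rt I k J ((t : ℕ) + 1) ⊆ Rt I k J (t : ℕ) := Rt_anti (Nat.le_succ _)
  have heq : Rt I k J ((t : ℕ) + 1) = Rt I k J (t : ℕ) := by
    refine subset_antisymm h2 ?_
    rw [h.1, ← h'.1]
    exact h1
  have : Kt I k J (t : ℕ) = ∅ := Kt_empty_iff.mpr heq
  rcases h.2.1 with ⟨x, hx⟩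
  rw [this] at hx
  exact Finset.notMem_empty x hx

lemma P1_unique {A : Finset V} {t t' : Fin k} (h : P1 (I := I) (J := J) A t)
    (h' : P1 (I := I) (J := J) A t') : t = t' := by
  rcases Nat.lt_trichotomy (t : ℕ) (t' : ℕ) with hlt | heq | hlt
  · exact absurd (P1_aux h h' hlt) id
  · exact Fin.ext heq
  · exact absurd (P1_aux h' h hlt) id

lemma P2_aux {A : Finset V} {j j' : Fin k} (h : P2 (I := I) (J := J) A j)
    (h' : P2 (I := I) (J := J) A j') (hlt : (j : ℕ) < (j' : ℕ)) : False := by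
  rcases h'.2.1 with ⟨x, hx⟩
  have hx1 : x ∈ Rt I k J ((j : ℕ) + 1) := Rt_anti (by omega) (Kt_subset_Rt hx)
  have hx2 : x ∈ J j := by
    rw [h.1, ← h'.1]
    exact Kt_subset_J hx
  exact notMem_J_of_mem_Rt (by omega) hx1 hx2

lemma P2_unique {A : Finset V} {j j' : Fin k} (h : P2 (I := I) (J := J) A j)
    (h' : P2 (I := I) (J := J) A j') : j = j' := by
  rcases Nat.lt_trichotomy (j : ℕ) (j' : ℕ) with hlt | heq | hlt
  · exact absurd (P2_aux h h' hlt) id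
  · exact Fin.ext heq
  · exact absurd (P2_aux h' h hlt) id

variable (I k J)

open Classical in
/-- The splitting rule for the flower construction. -/
noncomputable def fl (A : Finset V) : Finset (Finset V) :=
  if h1 : ∃ t : Fin k, P1 (I := I) (J := J) A t then
    {Kt I k J (h1.choose : ℕ), Rt I k J ((h1.choose : ℕ) + 1)}
  else if h2 : ∃ j : Fin k, P2 (I := I) (J := J) A j then
    {Kt I k J (h2.choose : ℕ), A \ Kt I k J (h2.choose : ℕ)}
  else if h3 : 2 ≤ A.card then
    {{A.min' (Finset.card_pos.mp (by omega))},
      A.erase (A.min' (Finset.card_pos.mp (by omega)))}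
  else ∅

variable {I k J}

lemma hsub_fl : ∀ A B : Finset V, B ∈ fl I k J A → B ⊂ A := by
  intro A B hB
  rw [fl] at hB
  split at hB
  · next h1 =>
    obtain ⟨hRA, hK, hR'⟩ := h1.choose_spec
    rw [← hRA]
    rcases Finset.mem_insert.mp hB with rfl | hB
    · rw [Finset.ssubset_iff_of_subset Kt_subset_Rt]
      rcases hR' with ⟨x, hx⟩
      exact ⟨x, Rt_anti (Nat.le_succ _) hx, fun hc => notMem_Rt_of_mem_Kt hc hx⟩
    · rw [Finset.mem_singleton] at hB
      subst hB
      rw [Finset.ssubset_iff_of_subset (Rt_anti (Nat.le_succ _))]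
      rcases hK with ⟨x, hx⟩
      exact ⟨x, Kt_subset_Rt hx, notMem_Rt_of_mem_Kt hx⟩
  · split at hB
    · next h2 =>
      obtain ⟨hJA, hK, hKA⟩ := h2.choose_spec
      rcases Finset.mem_insert.mp hB with rfl | hB
      · exact hKA
      · rw [Finset.mem_singleton] at hB
        subst hB
        exact Finset.sdiff_ssubset hKA.subset hK
    · split at hB
      · next h3 =>
        rcases Finset.mem_insert.mp hB with rfl | hB
        · constructor
          · exact Finset.singleton_subset_iff.mpr (Finset.min'_mem _ _)
          · intro hAB
            have := Finset.card_le_card hAB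
            simp at this
            omega
        · rw [Finset.mem_singleton] at hB
          subst hB
          exact Finset.erase_ssubset (Finset.min'_mem _ _)
      · simp at hB

lemma hcover_fl : ∀ A : Finset V, 2 ≤ A.card →
    (fl I k J A).biUnion id = A ∧ (fl I k J A).card = 2 ∧
    ∀ B ∈ fl I k J A, ∀ B' ∈ fl I k J A, B ≠ B' → B ∩ B' = ∅ := by
  intro A hA
  have pairs : ∀ X Y : Finset V, X ∩ Y = ∅ → X.Nonempty → X ∪ Y = A →
      ({X, Y} : Finset (Finset V)).biUnion id = A ∧
      ({X, Y} : Finset (Finset V)).card = 2 ∧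
      ∀ B ∈ ({X, Y} : Finset (Finset V)), ∀ B' ∈ ({X, Y} : Finset (Finset V)),
        B ≠ B' → B ∩ B' = ∅ := by
    intro X Y hdisj hXne hun
    have hXY : X ≠ Y := by
      rintro rfl
      rcases hXne with ⟨x, hx⟩
      have : x ∈ X ∩ X := Finset.mem_inter.mpr ⟨hx, hx⟩
      rw [hdisj] at this
      exact Finset.notMem_empty x this
    refine ⟨?_, ?_, ?_⟩
    · rw [show ({X, Y} : Finset (Finset V)) = insert X {Y} from rfl,
        Finset.biUnion_insert, Finset.singleton_biUnion]
      exact hun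
    · exact Finset.card_pair hXY
    · intro B hB B' hB' hne
      simp only [Finset.mem_insert, Finset.mem_singleton] at hB hB'
      rcases hB with rfl | rfl <;> rcases hB' with rfl | rfl
      · exact absurd rfl hne
      · exact hdisj
      · rw [Finset.inter_comm]; exact hdisj
      · exact absurd rfl hne
  rw [fl]
  split
  · next h1 =>
    obtain ⟨hRA, hK, hR'⟩ := h1.choose_spec
    refine pairs _ _ ?_ hK ?_
    · exact Finset.sdiff_inter_self _ _
    · rw [Kt_union, hRA]
  · split
    · next h2 =>
      obtain ⟨hJA, hK, hKA⟩ := h2.choose_spec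
      refine pairs _ _ ?_ hK ?_
      · ext x; simp only [Finset.mem_inter, Finset.mem_sdiff, Finset.notMem_empty,
          iff_false]; tauto
      · exact Finset.union_sdiff_of_subset hKA.subset
    · refine pairs _ _ ?_ ⟨_, Finset.mem_singleton_self _⟩ ?_
      · ext x; simp only [Finset.mem_inter, Finset.mem_singleton, Finset.mem_erase,
          Finset.notMem_empty, iff_false]; tauto
      · ext x
        simp only [Finset.mem_union, Finset.mem_singleton, Finset.mem_erase]
        constructor
        · rintro (rfl | ⟨-, hx⟩)
          · exact Finset.min'_mem _ _
          · exact hx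
        · intro hx
          by_cases hxm : x = A.min' (Finset.card_pos.mp (by omega))
          · exact Or.inl hxm
          · exact Or.inr ⟨hxm, hx⟩

lemma fl_eval_R {t : Fin k} (h : P1 (I := I) (J := J) (Rt I k J (t : ℕ)) t) :
    fl I k J (Rt I k J (t : ℕ)) = {Kt I k J (t : ℕ), Rt I k J ((t : ℕ) + 1)} := by
  rw [fl]
  have h1 : ∃ t' : Fin k, P1 (I := I) (J := J) (Rt I k J (t : ℕ)) t' := ⟨t, h⟩
  rw [dif_pos h1]
  have := P1_unique h1.choose_spec h
  rw [this]

lemma fl_eval_J {j : Fin k}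
    (hn1 : ¬ ∃ t : Fin k, P1 (I := I) (J := J) (J j) t)
    (h : P2 (I := I) (J := J) (J j) j) :
    fl I k J (J j) = {Kt I k J (j : ℕ), J j \ Kt I k J (j : ℕ)} := by
  rw [fl]
  rw [dif_neg hn1]
  have h2 : ∃ j' : Fin k, P2 (I := I) (J := J) (J j) j' := ⟨j, h⟩
  rw [dif_pos h2]
  have := P2_unique h2.choose_spec h
  rw [this]

end Flower

end FlowerAux
namespace FlowerAux

set_option linter.unusedSectionVars false
set_option maxHeartbeats 1000000

section FlowerRelax

variable {V : Type} [Fintype V] [DecidableEq V] [LinearOrder V]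
variable {I : Finset V} {k : ℕ} {J : Fin k → Finset V}
variable {E : Finset (Finset V)}

lemma L_card2 {t : ℕ} (hK : (Kt I k J t).Nonempty)
    (hR' : (Rt I k J (t + 1)).Nonempty) : 2 ≤ (Rt I k J t).card := by
  rcases hK with ⟨x, hx⟩
  rcases hR' with ⟨y, hy⟩
  refine Finset.one_lt_card.mpr ⟨x, Kt_subset_Rt hx, y, Rt_anti (Nat.le_succ t) hy, ?_⟩
  rintro rfl
  exact notMem_Rt_of_mem_Kt hx hy

lemma L_node_R (hIE : I ∈ E) (hcov : I ⊆ Finset.univ.biUnion J) :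
    ∀ t : ℕ, (Rt I k J t).Nonempty →
      Rt I k J t ∈ mkNodes (fl I k J) hsub_fl E := by
  intro t
  induction t with
  | zero => intro _; rw [Rt_zero]; exact mem_mkNodes_of_mem_E hIE
  | succ t ih =>
    intro hne'
    have hRtne : (Rt I k J t).Nonempty := by
      rcases hne' with ⟨x, hx⟩
      exact ⟨x, Rt_anti (Nat.le_succ t) hx⟩
    by_cases hK : Kt I k J t = ∅
    · rw [Kt_empty_iff.mp hK]
      exact ih hRtne
    · have hKne := Finset.nonempty_iff_ne_empty.mpr hK
      have htk : t < k := lt_k_of_Rt_succ_nonempty hcov hne'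
      have hev : fl I k J (Rt I k J t) = {Kt I k J t, Rt I k J (t + 1)} :=
        fl_eval_R (t := ⟨t, htk⟩) ⟨rfl, hKne, hne'⟩
      refine mkNodes_closed (ih hRtne) (L_card2 hKne hne') ?_
      rw [hev]
      exact Finset.mem_insert_of_mem (Finset.mem_singleton_self _)

variable (hE : ∀ A ∈ E, 2 ≤ A.card) {w : Finset V → ℝ}

lemma L_arc (hIE : I ∈ E) (hcov : I ⊆ Finset.univ.biUnion J)
    (hw : w ∈ relax (mkD (fl I k J) hsub_fl hcover_fl E hE))
    {t : ℕ} (hK : (Kt I k J t).Nonempty) (hR' : (Rt I k J (t + 1)).Nonempty) :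
    w (Rt I k J t) ≤ w (Kt I k J t) ∧ w (Rt I k J t) ≤ w (Rt I k J (t + 1)) := by
  have htk : t < k := lt_k_of_Rt_succ_nonempty hcov hR'
  have hRtne : (Rt I k J t).Nonempty := by
    rcases hR' with ⟨x, hx⟩
    exact ⟨x, Rt_anti (Nat.le_succ t) hx⟩
  have hnode := L_node_R hIE hcov t hRtne
  have hcard2 := L_card2 hK hR'
  have hev : fl I k J (Rt I k J t) = {Kt I k J t, Rt I k J (t + 1)} :=
    fl_eval_R (t := ⟨t, htk⟩) ⟨rfl, hK, hR'⟩
  constructor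
  · refine hw.2.1 (Rt I k J t, Kt I k J t) ?_
    refine mem_mkArcs.mpr ⟨hnode, hcard2, ?_⟩
    rw [hev]
    exact Finset.mem_insert_self _ _
  · refine hw.2.1 (Rt I k J t, Rt I k J (t + 1)) ?_
    refine mem_mkArcs.mpr ⟨hnode, hcard2, ?_⟩
    rw [hev]
    exact Finset.mem_insert_of_mem (Finset.mem_singleton_self _)

lemma L_mono (hIE : I ∈ E) (hcov : I ⊆ Finset.univ.biUnion J)
    (hw : w ∈ relax (mkD (fl I k J) hsub_fl hcover_fl E hE))
    {s t : ℕ} (hst : s ≤ t) (h : (Rt I k J t).Nonempty) :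
    w (Rt I k J s) ≤ w (Rt I k J t) := by
  induction t with
  | zero =>
    have : s = 0 := Nat.le_zero.mp hst
    subst this
    exact le_refl _
  | succ t ih =>
    rcases Nat.lt_or_ge s (t + 1) with hs | hs
    · have hst' : s ≤ t := by omega
      by_cases hK : Kt I k J t = ∅
      · have heq := Kt_empty_iff.mp hK
        rw [heq]
        exact ih hst' (heq ▸ h)
      · have hKne := Finset.nonempty_iff_ne_empty.mpr hK
        have hRtne : (Rt I k J t).Nonempty := by
          rcases h with ⟨x, hx⟩
          exact ⟨x, Rt_anti (Nat.le_succ t) hx⟩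
        exact le_trans (ih hst' hRtne) (L_arc hE hIE hcov hw hKne h).2
    · have : s = t + 1 := by omega
      subst this
      exact le_refl _

lemma L_RK (hIE : I ∈ E) (hcov : I ⊆ Finset.univ.biUnion J)
    (hw : w ∈ relax (mkD (fl I k J) hsub_fl hcover_fl E hE))
    {t : ℕ} (hK : (Kt I k J t).Nonempty) :
    w (Rt I k J t) ≤ w (Kt I k J t) := by
  by_cases hR' : (Rt I k J (t + 1)).Nonempty
  · exact (L_arc hE hIE hcov hw hK hR').1
  · have hempty := Finset.not_nonempty_iff_eq_empty.mp hR'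
    have hun := Kt_union (I := I) (k := k) (J := J) (t := t)
    rw [hempty, Finset.union_empty] at hun
    rw [← hun]

lemma L_J (hIE : I ∈ E) (hJmem : ∀ j : Fin k, J j ∈ E ∨ IsSingleton (J j))
    (hcov : I ⊆ Finset.univ.biUnion J)
    (hw : w ∈ relax (mkD (fl I k J) hsub_fl hcover_fl E hE))
    (j : Fin k) (hK : (Kt I k J (j : ℕ)).Nonempty) :
    w (J j) ≤ w (Kt I k J (j : ℕ)) := by
  by_cases h1 : ∃ t : Fin k, P1 (I := I) (J := J) (J j) t
  · obtain ⟨t, hRA, htK, htR'⟩ := h1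
    have hRjne : (Rt I k J (j : ℕ)).Nonempty := by
      rcases hK with ⟨x, hx⟩
      exact ⟨x, Kt_subset_Rt hx⟩
    have htle : (t : ℕ) ≤ (j : ℕ) := by
      by_contra hc
      push_neg at hc
      rcases hK with ⟨x, hx⟩
      have hxJ : x ∈ J j := Kt_subset_J hx
      have hxR : x ∈ Rt I k J ((j : ℕ) + 1) := by
        rw [← hRA] at hxJ
        exact Rt_anti (by omega) hxJ
      exact notMem_Rt_of_mem_Kt hx hxR
    calc w (J j) = w (Rt I k J (t : ℕ)) := by rw [hRA]
      _ ≤ w (Rt I k J (j : ℕ)) := L_mono hE hIE hcov hw htle hRjne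
      _ ≤ w (Kt I k J (j : ℕ)) := L_RK hE hIE hcov hw hK
  · by_cases heq : Kt I k J (j : ℕ) = J j
    · rw [heq]
    · have hss : Kt I k J (j : ℕ) ⊂ J j := ssubset_of_subset_of_ne Kt_subset_J heq
      have hev := fl_eval_J h1 ⟨rfl, hK, hss⟩
      have hJnode : J j ∈ mkNodes (fl I k J) hsub_fl E := by
        rcases hJmem j with h | ⟨v, hv⟩
        · exact mem_mkNodes_of_mem_E h
        · rw [hv]; exact singleton_mem_mkNodes v
      have hcard : 2 ≤ (J j).card := by
        rcases hK with ⟨x, hx⟩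
        rcases Finset.exists_of_ssubset hss with ⟨y, hyJ, hyK⟩
        refine Finset.one_lt_card.mpr ⟨x, Kt_subset_J hx, y, hyJ, ?_⟩
        rintro rfl
        exact hyK hx
      refine hw.2.1 (J j, Kt I k J (j : ℕ)) ?_
      refine mem_mkArcs.mpr ⟨hJnode, hcard, ?_⟩
      rw [hev]
      exact Finset.mem_insert_self _ _

lemma L_key (hIE : I ∈ E) (hJmem : ∀ j : Fin k, J j ∈ E ∨ IsSingleton (J j))
    (hcov : I ⊆ Finset.univ.biUnion J)
    (hw : w ∈ relax (mkD (fl I k J) hsub_fl hcover_fl E hE)) :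
    ∀ m t : ℕ, k ≤ t + m → (Rt I k J t).Nonempty →
      1 ≤ w (Rt I k J t)
        + ∑ j ∈ Finset.univ.filter (fun j : Fin k => t ≤ (j : ℕ)), (1 - w (J j)) := by
  have hJnodes : ∀ j : Fin k, J j ∈ mkNodes (fl I k J) hsub_fl E := by
    intro j
    rcases hJmem j with h | ⟨v, hv⟩
    · exact mem_mkNodes_of_mem_E h
    · rw [hv]; exact singleton_mem_mkNodes v
  have hJb : ∀ j : Fin k, 0 ≤ w (J j) ∧ w (J j) ≤ 1 := fun j => hw.1 (J j) (hJnodes j)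
  intro m
  induction m with
  | zero =>
    intro t ht hne
    exfalso
    rcases hne with ⟨x, hx⟩
    have : x ∈ Rt I k J k := Rt_anti (by omega) hx
    rw [Rt_k_empty hcov] at this
    exact Finset.notMem_empty x this
  | succ m ih =>
    intro t hkt hne
    by_cases htk : t < k
    swap
    · exfalso
      rcases hne with ⟨x, hx⟩
      have : x ∈ Rt I k J k := Rt_anti (by omega) hx
      rw [Rt_k_empty hcov] at this
      exact Finset.notMem_empty x this
    · set jt : Fin k := ⟨t, htk⟩ with hjt
      have hsplit : Finset.univ.filter (fun j : Fin k => t ≤ (j : ℕ))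
          = insert jt (Finset.univ.filter (fun j : Fin k => t + 1 ≤ (j : ℕ))) := by
        ext j
        simp only [Finset.mem_filter, Finset.mem_univ, true_and, Finset.mem_insert,
          Fin.ext_iff, hjt]
        omega
      have hnot : jt ∉ Finset.univ.filter (fun j : Fin k => t + 1 ≤ (j : ℕ)) := by
        simp [hjt]
      rw [hsplit, Finset.sum_insert hnot]
      have hS0 : 0 ≤ ∑ j ∈ Finset.univ.filter (fun j : Fin k => t + 1 ≤ (j : ℕ)),
          (1 - w (J j)) := by
        refine Finset.sum_nonneg fun j _ => ?_
        have := (hJb j).2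
        linarith
      have hJt1 : w (J jt) ≤ 1 := (hJb jt).2
      by_cases hK : Kt I k J t = ∅
      · have heq := Kt_empty_iff.mp hK
        have h1 := ih (t + 1) (by omega) (by rw [heq]; exact hne)
        rw [heq] at h1
        linarith
      · have hKne := Finset.nonempty_iff_ne_empty.mpr hK
        have hwJK : w (J jt) ≤ w (Kt I k J t) :=
          L_J hE hIE hJmem hcov hw jt hKne
        by_cases hR' : (Rt I k J (t + 1)).Nonempty
        · have h1 := ih (t + 1) (by omega) hR'
          have hcard2 := L_card2 hKne hR'
          have hnode := L_node_R hIE hcov t hne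
          have hns : ¬ IsSingleton (Rt I k J t) :=
            (not_isSingleton_iff hne).mpr hcard2
          have hineq := hw.2.2 (Rt I k J t) hnode hns
          have hev : fl I k J (Rt I k J t) = {Kt I k J t, Rt I k J (t + 1)} :=
            fl_eval_R (t := ⟨t, htk⟩) ⟨rfl, hKne, hR'⟩
          have hKR : Kt I k J t ≠ Rt I k J (t + 1) := by
            rcases hKne with ⟨x, hx⟩
            intro hc
            exact notMem_Rt_of_mem_Kt hx (hc ▸ hx)
          have hsucc : succOf (mkD (fl I k J) hsub_fl hcover_fl E hE).arcs
              (Rt I k J t) = {Kt I k J t, Rt I k J (t + 1)} := by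
            have := succOf_mkArcs (hsub := hsub_fl) (E := E) hnode hcard2
            rw [mkD_arcs, this, hev]
          rw [hsucc, Finset.sum_pair hKR] at hineq
          linarith
        · have hempty := Finset.not_nonempty_iff_eq_empty.mp hR'
          have hun := Kt_union (I := I) (k := k) (J := J) (t := t)
          rw [hempty, Finset.union_empty] at hun
          rw [← hun]
          linarith

lemma L_final (hIE : I ∈ E) (hJmem : ∀ j : Fin k, J j ∈ E ∨ IsSingleton (J j))
    (hcov : I ⊆ Finset.univ.biUnion J)
    (hw : w ∈ relax (mkD (fl I k J) hsub_fl hcover_fl E hE)) :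
    1 ≤ w I + ∑ j : Fin k, (1 - w (J j)) := by
  have hne : I.Nonempty := Finset.card_pos.mp (by have := hE I hIE; omega)
  have h := L_key hE hIE hJmem hcov hw k 0 (by omega) (by rw [Rt_zero]; exact hne)
  rw [Rt_zero] at h
  have hfilter : Finset.univ.filter (fun j : Fin k => 0 ≤ (j : ℕ)) = Finset.univ := by
    ext j; simp
  rw [hfilter] at h
  exact h

end FlowerRelax

end FlowerAux
/-- the intersection of the projected relaxations `P_E(D)` over all
recursive McCormick linearizations `D` of `G` is contained in `flowerRel(G)`. -/
theorem intersection_mccormick_subset_flowerRel {V : Type} [Fintype V] [DecidableEq V]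
    (E : Finset (Finset V)) (hE : ∀ I ∈ E, 2 ≤ I.card) :
    { z | ∀ D : RecLin V, RecLinOf D E ∧ McCormick D → z ∈ projRelax D E }
      ⊆ flowerRel E := by
  intro z hz
  letI : LinearOrder V :=
    LinearOrder.lift' (Fintype.equivFin V) (Fintype.equivFin V).injective
  have getw : ∀ (I0 : Finset V) (k : ℕ) (J : Fin k → Finset V),
      ∃ w ∈ relax (FlowerAux.mkD (FlowerAux.fl I0 k J) FlowerAux.hsub_fl
          FlowerAux.hcover_fl E hE),
        ∀ A : Finset V, (A ∈ E ∨ IsSingleton A) → w A = z A := by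
    intro I0 k J
    exact hz _ ⟨FlowerAux.mkD_recLinOf FlowerAux.hcover_fl hE,
      FlowerAux.mkD_mcCormick FlowerAux.hcover_fl hE⟩
  refine ⟨?_, ?_, ?_⟩
  · intro A hA
    obtain ⟨w, hw, hag⟩ := getw ∅ 0 Fin.elim0
    have hAnode : A ∈ FlowerAux.mkNodes (FlowerAux.fl ∅ 0 Fin.elim0)
        FlowerAux.hsub_fl E := by
      rcases hA with h | ⟨v, rfl⟩
      · exact FlowerAux.mem_mkNodes_of_mem_E h
      · exact FlowerAux.singleton_mem_mkNodes v
    rw [← hag A hA]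
    exact hw.1 A hAnode
  · intro A hA v hv
    obtain ⟨w, hw, hag⟩ := getw ∅ 0 Fin.elim0
    have hAnode : A ∈ FlowerAux.mkNodes (FlowerAux.fl ∅ 0 Fin.elim0)
        FlowerAux.hsub_fl E := FlowerAux.mem_mkNodes_of_mem_E hA
    have h := FlowerAux.relax_mono hw hAnode hv
    rwa [hag A (Or.inl hA), hag {v} (Or.inr ⟨v, rfl⟩)] at h
  · intro I hI k J hJmem hcov hmeet
    obtain ⟨w, hw, hag⟩ := getw I k J
    have h := FlowerAux.L_final hE hI hJmem hcov hw
    rw [hag I (Or.inl hI)] at h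
    have hsum : ∑ j : Fin k, (1 - w (J j)) = ∑ j : Fin k, (1 - z (J j)) :=
      Finset.sum_congr rfl fun j _ => by rw [hag (J j) (hJmem j)]
    rw [hsum] at h
    exact h
end

section
/- Let G = (V, E) be a hypergraph, let I ∈ E, and let J_1, …, J_k ∈ E ∪ S be any valid neighbor set, i.e., J_1 ∪ … ∪ J_k ⊇ I and J_i ∩ I ≠ ∅ for all i. Then there exists a recursive McCormick linearization D of G such that every z ∈ P_E(D) satisfies the extended flower inequality z_I + Σ_{i=1}^k (1 − z_{J_i}) ≥ 1. (In particular, no assumption of non-redundancy of the neighbor set is needed.) -/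
open Finset

set_option linter.unusedSectionVars false
variable {V : Type} [DecidableEq V]

/-- A "repaired" split function: returns `f K` if it is a nonempty proper subset of `K`,
otherwise a singleton from `K`. -/
noncomputable def goodSplit (f : Finset V → Finset V) (K : Finset V) : Finset V :=
  if (f K).Nonempty ∧ f K ⊂ K then f K
  else if h2 : K.Nonempty then {h2.choose} else ∅

lemma goodSplit_spec (f : Finset V → Finset V) (K : Finset V) (hK : 2 ≤ K.card) :
    (goodSplit f K).Nonempty ∧ goodSplit f K ⊂ K := by
  unfold goodSplit
  split_ifs with h1 h2
  · exact h1
  · refine ⟨singleton_nonempty _, ?_⟩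
    have hsub : ({h2.choose} : Finset V) ⊆ K := singleton_subset_iff.2 h2.choose_spec
    refine ssubset_of_subset_of_ne hsub fun he => ?_
    have : K.card = 1 := by rw [← he]; simp
    omega
  · exfalso
    exact h2 (card_pos.mp (by omega))

lemma goodSplit_eq (f : Finset V → Finset V) (K : Finset V)
    (h1 : (f K).Nonempty) (h2 : f K ⊂ K) : goodSplit f K = f K := by
  unfold goodSplit
  rw [if_pos ⟨h1, h2⟩]

lemma card_goodSplit_lt (f : Finset V → Finset V) (K : Finset V) (hK : 2 ≤ K.card) :
    (goodSplit f K).card < K.card :=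
  card_lt_card (goodSplit_spec f K hK).2

lemma card_sdiff_goodSplit_lt (f : Finset V → Finset V) (K : Finset V) (hK : 2 ≤ K.card) :
    (K \ goodSplit f K).card < K.card := by
  obtain ⟨hne, hss⟩ := goodSplit_spec f K hK
  exact card_lt_card (sdiff_ssubset hss.subset hne)

lemma sdiff_goodSplit_nonempty (f : Finset V → Finset V) (K : Finset V) (hK : 2 ≤ K.card) :
    (K \ goodSplit f K).Nonempty := by
  obtain ⟨hne, hss⟩ := goodSplit_spec f K hK
  obtain ⟨x, hxK, hxg⟩ := exists_of_ssubset hss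
  exact ⟨x, mem_sdiff.2 ⟨hxK, hxg⟩⟩

/-- All descendants of `K` under the recursive binary split given by `goodSplit f`. -/
noncomputable def descend (f : Finset V → Finset V) (K : Finset V) : Finset (Finset V) :=
  if h : 2 ≤ K.card then
    insert K (descend f (goodSplit f K) ∪ descend f (K \ goodSplit f K))
  else {K}
termination_by K.card
decreasing_by
  · exact card_goodSplit_lt f K h
  · exact card_sdiff_goodSplit_lt f K h

lemma self_mem_descend (f : Finset V → Finset V) (K : Finset V) : K ∈ descend f K := by
  rw [descend]
  split_ifs <;> simp

lemma descend_children (f : Finset V → Finset V) (K : Finset V) (hK : 2 ≤ K.card) :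
    goodSplit f K ∈ descend f K ∧ K \ goodSplit f K ∈ descend f K := by
  rw [descend, dif_pos hK]
  exact ⟨mem_insert_of_mem (mem_union_left _ (self_mem_descend f _)),
    mem_insert_of_mem (mem_union_right _ (self_mem_descend f _))⟩

lemma descend_nonempty (f : Finset V → Finset V) {e K : Finset V}
    (he : e.Nonempty) (hK : K ∈ descend f e) : K.Nonempty := by
  induction e using Finset.strongInductionOn with
  | _ e ih =>
  rw [descend] at hK
  by_cases h : 2 ≤ e.card
  · rw [dif_pos h] at hK
    rcases mem_insert.mp hK with rfl | hK
    · exact he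
    rcases mem_union.mp hK with hK | hK
    · exact ih _ (goodSplit_spec f e h).2 (goodSplit_spec f e h).1 hK
    · exact ih _ (sdiff_ssubset (goodSplit_spec f e h).2.subset (goodSplit_spec f e h).1) (sdiff_goodSplit_nonempty f e h) hK
  · rw [dif_neg h] at hK
    rw [mem_singleton.mp hK]; exact he

lemma descend_subset (f : Finset V → Finset V) {e K : Finset V}
    (hK : K ∈ descend f e) : K ⊆ e := by
  induction e using Finset.strongInductionOn with
  | _ e ih =>
  rw [descend] at hK
  by_cases h : 2 ≤ e.card
  · rw [dif_pos h] at hK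
    rcases mem_insert.mp hK with rfl | hK
    · exact subset_rfl
    rcases mem_union.mp hK with hK | hK
    · exact (ih _ (goodSplit_spec f e h).2 hK).trans (goodSplit_spec f e h).2.subset
    · exact (ih _ (sdiff_ssubset (goodSplit_spec f e h).2.subset (goodSplit_spec f e h).1) hK).trans (sdiff_subset)
  · rw [dif_neg h] at hK
    rw [mem_singleton.mp hK]

lemma descend_closed (f : Finset V → Finset V) {e K : Finset V}
    (hK : K ∈ descend f e) (h2 : 2 ≤ K.card) :
    goodSplit f K ∈ descend f e ∧ K \ goodSplit f K ∈ descend f e := by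
  induction e using Finset.strongInductionOn with
  | _ e ih =>
  rw [descend] at hK
  by_cases h : 2 ≤ e.card
  · rw [dif_pos h] at hK
    rw [descend, dif_pos h]
    rcases mem_insert.mp hK with rfl | hK
    · exact ⟨mem_insert_of_mem (mem_union_left _ (self_mem_descend f _)),
        mem_insert_of_mem (mem_union_right _ (self_mem_descend f _))⟩
    rcases mem_union.mp hK with hK | hK
    · obtain ⟨a, b⟩ := ih _ (goodSplit_spec f e h).2 hK
      exact ⟨mem_insert_of_mem (mem_union_left _ a), mem_insert_of_mem (mem_union_left _ b)⟩
    · obtain ⟨a, b⟩ := ih _ (sdiff_ssubset (goodSplit_spec f e h).2.subset (goodSplit_spec f e h).1) hK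
      exact ⟨mem_insert_of_mem (mem_union_right _ a), mem_insert_of_mem (mem_union_right _ b)⟩
  · rw [dif_neg h] at hK
    rw [mem_singleton.mp hK] at h2 ⊢
    omega

lemma descend_parent (f : Finset V → Finset V) {e K : Finset V}
    (hK : K ∈ descend f e) :
    K = e ∨ ∃ K' ∈ descend f e, 2 ≤ K'.card ∧
      (K = goodSplit f K' ∨ K = K' \ goodSplit f K') := by
  induction e using Finset.strongInductionOn with
  | _ e ih =>
  rw [descend] at hK
  by_cases h : 2 ≤ e.card
  · rw [dif_pos h] at hK
    rcases mem_insert.mp hK with rfl | hK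
    · exact Or.inl rfl
    right
    rcases mem_union.mp hK with hK | hK
    · rcases ih _ (goodSplit_spec f e h).2 hK with rfl | ⟨K', hK', h2, hor⟩
      · exact ⟨e, self_mem_descend f e, h, Or.inl rfl⟩
      · exact ⟨K', ((descend_children f e h).1 |> fun _ => by
          rw [descend, dif_pos h]
          exact mem_insert_of_mem (mem_union_left _ hK')), h2, hor⟩
    · rcases ih _ (sdiff_ssubset (goodSplit_spec f e h).2.subset (goodSplit_spec f e h).1) hK with rfl | ⟨K', hK', h2, hor⟩
      · exact ⟨e, self_mem_descend f e, h, Or.inr rfl⟩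
      · exact ⟨K', (by
          rw [descend, dif_pos h]
          exact mem_insert_of_mem (mem_union_right _ hK')), h2, hor⟩
  · rw [dif_neg h] at hK
    exact Or.inl (mem_singleton.mp hK)

section Construction
variable {V : Type} [Fintype V] [DecidableEq V]

noncomputable def mkNodes (f : Finset V → Finset V) (E : Finset (Finset V)) :
    Finset (Finset V) :=
  E.biUnion (descend f) ∪ Finset.univ.image (fun v => ({v} : Finset V))

lemma singleton_mem_mkNodes (f : Finset V → Finset V) (E : Finset (Finset V)) (v : V) :
    ({v} : Finset V) ∈ mkNodes f E :=
  mem_union_right _ (mem_image.2 ⟨v, mem_univ v, rfl⟩)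

lemma mem_mkNodes_of_E (f : Finset V → Finset V) {E : Finset (Finset V)} {e : Finset V}
    (he : e ∈ E) : e ∈ mkNodes f E :=
  mem_union_left _ (mem_biUnion.2 ⟨e, he, self_mem_descend f e⟩)

lemma mkNodes_nonempty (f : Finset V → Finset V) {E : Finset (Finset V)}
    (hE : ∀ e ∈ E, e.Nonempty) {K : Finset V} (hK : K ∈ mkNodes f E) : K.Nonempty := by
  rcases mem_union.mp hK with h | h
  · obtain ⟨e, he, hKe⟩ := mem_biUnion.mp h
    exact descend_nonempty f (hE e he) hKe
  · obtain ⟨v, _, rfl⟩ := mem_image.mp h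
    exact singleton_nonempty v

lemma mkNodes_closed (f : Finset V → Finset V) {E : Finset (Finset V)} {K : Finset V}
    (hK : K ∈ mkNodes f E) (h2 : 2 ≤ K.card) :
    goodSplit f K ∈ mkNodes f E ∧ K \ goodSplit f K ∈ mkNodes f E := by
  rcases mem_union.mp hK with h | h
  · obtain ⟨e, he, hKe⟩ := mem_biUnion.mp h
    obtain ⟨a, b⟩ := descend_closed f hKe h2
    exact ⟨mem_union_left _ (mem_biUnion.2 ⟨e, he, a⟩),
      mem_union_left _ (mem_biUnion.2 ⟨e, he, b⟩)⟩
  · obtain ⟨v, _, rfl⟩ := mem_image.mp h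
    simp at h2

noncomputable def mkArcs (f : Finset V → Finset V) (E : Finset (Finset V)) :
    Finset (Finset V × Finset V) :=
  (mkNodes f E).biUnion fun K =>
    if 2 ≤ K.card then {(K, goodSplit f K), (K, K \ goodSplit f K)} else ∅

lemma mem_mkArcs (f : Finset V → Finset V) (E : Finset (Finset V))
    (a : Finset V × Finset V) :
    a ∈ mkArcs f E ↔ a.1 ∈ mkNodes f E ∧ 2 ≤ a.1.card ∧
      (a.2 = goodSplit f a.1 ∨ a.2 = a.1 \ goodSplit f a.1) := by
  unfold mkArcs
  rw [mem_biUnion]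
  constructor
  · rintro ⟨K, hK, ha⟩
    split_ifs at ha with h
    · rcases mem_insert.mp ha with rfl | ha
      · exact ⟨hK, h, Or.inl rfl⟩
      · rw [mem_singleton.mp ha]
        exact ⟨hK, h, Or.inr rfl⟩
    · simp at ha
  · rintro ⟨h1, h2, h3⟩
    refine ⟨a.1, h1, ?_⟩
    rw [if_pos h2]
    rcases h3 with h3 | h3
    · exact mem_insert.2 (Or.inl (by rw [← h3]))
    · exact mem_insert.2 (Or.inr (mem_singleton.2 (by rw [← h3])))

lemma succOf_mkArcs (f : Finset V → Finset V) (E : Finset (Finset V)) (K : Finset V)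
    (hK : K ∈ mkNodes f E) (h2 : 2 ≤ K.card) :
    succOf (mkArcs f E) K = {goodSplit f K, K \ goodSplit f K} := by
  ext X
  unfold succOf
  rw [mem_image]
  constructor
  · rintro ⟨a, ha, rfl⟩
    rw [mem_filter] at ha
    obtain ⟨ha, rfl⟩ := ha
    rcases (mem_mkArcs f E a).mp ha with ⟨_, _, h | h⟩ <;> simp [h]
  · intro hX
    rcases mem_insert.mp hX with rfl | hX
    · exact ⟨(K, goodSplit f K), mem_filter.2 ⟨(mem_mkArcs f E _).2 ⟨hK, h2, Or.inl rfl⟩, rfl⟩, rfl⟩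
    · rw [mem_singleton.mp hX]
      exact ⟨(K, K \ goodSplit f K),
        mem_filter.2 ⟨(mem_mkArcs f E _).2 ⟨hK, h2, Or.inr rfl⟩, rfl⟩, rfl⟩

lemma not_isSingleton_iff {K : Finset V} (hne : K.Nonempty) :
    ¬ IsSingleton K ↔ 2 ≤ K.card := by
  constructor
  · intro h
    rcases (Nat.lt_or_ge K.card 2) with hlt | hge
    · interval_cases h' : K.card
      · simp [card_eq_zero.mp h'] at hne
      · exact absurd (card_eq_one.mp h') h
    · exact hge
  · rintro h2 ⟨v, rfl⟩
    simp at h2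

noncomputable def mkRecLin (f : Finset V → Finset V) (E : Finset (Finset V))
    (hE : ∀ e ∈ E, e.Nonempty) : RecLin V where
  nodes := mkNodes f E
  arcs := mkArcs f E
  arcs_fst_mem a ha := ((mem_mkArcs f E a).mp ha).1
  arcs_snd_mem a ha := by
    obtain ⟨h1, h2, h3⟩ := (mem_mkArcs f E a).mp ha
    obtain ⟨c1, c2⟩ := mkNodes_closed f h1 h2
    rcases h3 with h3 | h3 <;> rw [h3] <;> assumption
  no_loops a ha := by
    obtain ⟨h1, h2, h3⟩ := (mem_mkArcs f E a).mp ha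
    obtain ⟨hne, hss⟩ := goodSplit_spec f a.1 h2
    rcases h3 with h3 | h3 <;> rw [h3]
    · exact fun he => hss.ne (he ▸ rfl)
    · intro he
      exact (sdiff_ssubset hss.subset hne).ne (he ▸ rfl)
  singleton_mem v := singleton_mem_mkNodes f E v
  nodes_nonempty K hK := mkNodes_nonempty f hE hK
  arcs_subset a ha := by
    obtain ⟨h1, h2, h3⟩ := (mem_mkArcs f E a).mp ha
    rcases h3 with h3 | h3 <;> rw [h3]
    · exact (goodSplit_spec f a.1 h2).2.subset
    · exact sdiff_subset
  succ_union K hK hns := by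
    have h2 : 2 ≤ K.card := (not_isSingleton_iff (mkNodes_nonempty f hE hK)).mp hns
    rw [succOf_mkArcs f E K hK h2]
    rw [biUnion_insert]
    simp only [singleton_biUnion, id]
    exact union_sdiff_of_subset (goodSplit_spec f K h2).2.subset

lemma mkRecLin_of (f : Finset V → Finset V) (E : Finset (Finset V))
    (hE : ∀ e ∈ E, e.Nonempty) : RecLinOf (mkRecLin f E hE) E := by
  constructor
  · intro e he
    exact mem_mkNodes_of_E f he
  · intro K hK hnoarc
    rcases mem_union.mp hK with h | h
    · obtain ⟨e, he, hKe⟩ := mem_biUnion.mp h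
      rcases descend_parent f hKe with rfl | ⟨K', hK', h2, hor⟩
      · exact Or.inl he
      · exfalso
        have hK'n : K' ∈ mkNodes f E := mem_union_left _ (mem_biUnion.2 ⟨e, he, hK'⟩)
        rcases hor with h3 | h3
        · exact hnoarc (K', K) ((mem_mkArcs f E _).2 ⟨hK'n, h2, Or.inl h3⟩) rfl
        · exact hnoarc (K', K) ((mem_mkArcs f E _).2 ⟨hK'n, h2, Or.inr h3⟩) rfl
    · obtain ⟨v, _, rfl⟩ := mem_image.mp h
      exact Or.inr ⟨v, rfl⟩

lemma mkRecLin_mccormick (f : Finset V → Finset V) (E : Finset (Finset V))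
    (hE : ∀ e ∈ E, e.Nonempty) : McCormick (mkRecLin f E hE) := by
  have hsucc : ∀ K ∈ mkNodes f E, ∀ X ∈ succOf (mkArcs f E) K,
      (X = goodSplit f K ∨ X = K \ goodSplit f K) ∧ 2 ≤ K.card := by
    intro K hK X hX
    unfold succOf at hX
    obtain ⟨a, ha, rfl⟩ := mem_image.mp hX
    rw [mem_filter] at ha
    obtain ⟨ha, rfl⟩ := ha
    obtain ⟨_, h2, h3⟩ := (mem_mkArcs f E a).mp ha
    exact ⟨h3, h2⟩
  constructor
  · intro K hK X hX X' hX' hne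
    obtain ⟨h3, h2⟩ := hsucc K hK X hX
    obtain ⟨h3', _⟩ := hsucc K hK X' hX'
    rcases h3 with rfl | rfl <;> rcases h3' with rfl | rfl
    · exact absurd rfl hne
    · exact inter_sdiff_self _ _
    · rw [inter_comm]; exact inter_sdiff_self _ _
    · exact absurd rfl hne
  · intro K hK hns
    have h2 : 2 ≤ K.card := (not_isSingleton_iff (mkNodes_nonempty f hE hK)).mp hns
    have := succOf_mkArcs f E K hK h2
    rw [show (mkRecLin f E hE).arcs = mkArcs f E from rfl] at *
    rw [this]
    rw [card_insert_of_notMem, card_singleton]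
    intro hmem
    rw [mem_singleton] at hmem
    obtain ⟨hne, hss⟩ := goodSplit_spec f K h2
    obtain ⟨x, hx⟩ := hne
    have := hmem ▸ hx
    exact (mem_sdiff.mp this).2 hx

lemma relax_facts (f : Finset V → Finset V) (E : Finset (Finset V))
    (hE : ∀ e ∈ E, e.Nonempty) {w : Finset V → ℝ}
    (hw : w ∈ relax (mkRecLin f E hE)) {K : Finset V}
    (hK : K ∈ mkNodes f E) (h2 : 2 ≤ K.card) :
    w K ≤ w (goodSplit f K) ∧ w K ≤ w (K \ goodSplit f K) ∧
      w K + (1 - w (goodSplit f K)) + (1 - w (K \ goodSplit f K)) ≥ 1 := by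
  obtain ⟨hbd, harc, hnode⟩ := hw
  have ha1 : ((K, goodSplit f K) : Finset V × Finset V) ∈ mkArcs f E :=
    (mem_mkArcs f E _).2 ⟨hK, h2, Or.inl rfl⟩
  have ha2 : ((K, K \ goodSplit f K) : Finset V × Finset V) ∈ mkArcs f E :=
    (mem_mkArcs f E _).2 ⟨hK, h2, Or.inr rfl⟩
  refine ⟨harc _ ha1, harc _ ha2, ?_⟩
  have hns : ¬ IsSingleton K := by
    rw [not_isSingleton_iff (mkNodes_nonempty f hE hK)]; exact h2
  have := hnode K hK hns
  rw [show (mkRecLin f E hE).arcs = mkArcs f E from rfl, succOf_mkArcs f E K hK h2] at this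
  have hnemem : goodSplit f K ∉ ({K \ goodSplit f K} : Finset (Finset V)) := by
    rw [mem_singleton]
    intro hmem
    obtain ⟨x, hx⟩ := (goodSplit_spec f K h2).1
    exact (mem_sdiff.mp (hmem ▸ hx)).2 hx
  rwa [sum_insert hnemem, sum_singleton, ← add_assoc] at this

end Construction

section Flower
variable {V : Type} [DecidableEq V] {k : ℕ}

/-- The part of `I` assigned to neighbor `i`: elements of `I` whose minimal covering
neighbor is `J i`. -/
def flowerParts (I : Finset V) (J : Fin k → Finset V) (i : Fin k) : Finset V :=
  I.filter (fun v => v ∈ J i ∧ ∀ j, j < i → v ∉ J j)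

lemma flowerParts_subset_I (I : Finset V) (J : Fin k → Finset V) (i : Fin k) :
    flowerParts I J i ⊆ I := filter_subset _ _

lemma flowerParts_subset_J (I : Finset V) (J : Fin k → Finset V) (i : Fin k) :
    flowerParts I J i ⊆ J i := fun v hv => (mem_filter.mp hv).2.1

lemma flowerParts_disj (I : Finset V) (J : Fin k → Finset V) {i j : Fin k} (hij : i ≠ j) :
    flowerParts I J i ∩ flowerParts I J j = ∅ := by
  rw [eq_empty_iff_forall_notMem]
  intro v hv
  rw [mem_inter] at hv
  simp only [flowerParts, mem_filter] at hv
  obtain ⟨⟨_, hvi, hi⟩, ⟨_, hvj, hj⟩⟩ := hv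
  rcases lt_or_gt_of_ne hij with h | h
  · exact hj i h hvi
  · exact hi j h hvj

lemma flowerParts_cover (I : Finset V) (J : Fin k → Finset V)
    (hcover : I ⊆ Finset.univ.biUnion J) {v : V} (hv : v ∈ I) :
    ∃ i, v ∈ flowerParts I J i := by
  have : ((univ : Finset (Fin k)).filter fun i => v ∈ J i).Nonempty := by
    obtain ⟨i, _, hvi⟩ := mem_biUnion.mp (hcover hv)
    exact ⟨i, mem_filter.2 ⟨mem_univ i, hvi⟩⟩
  set i0 := (Finset.min' _ this) with hi0
  refine ⟨i0, mem_filter.2 ⟨hv, (mem_filter.mp (min'_mem _ this)).2, fun j hj hvj => ?_⟩⟩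
  exact absurd (min'_le _ j (mem_filter.2 ⟨mem_univ j, hvj⟩)) (not_le.mpr hj)

/-- The candidate set of indices used to split `K`. -/
def flowerIdx (I : Finset V) (J : Fin k → Finset V) (K : Finset V) : Finset (Fin k) :=
  (univ : Finset (Fin k)).filter fun i =>
    (flowerParts I J i ∩ K).Nonempty ∧ ¬ K ⊆ flowerParts I J i

/-- The split function driving the McCormick linearization for the flower inequality. -/
noncomputable def flowerF (I : Finset V) (J : Fin k → Finset V) (K : Finset V) : Finset V :=
  if h : (flowerIdx I J K).Nonempty then
    flowerParts I J ((flowerIdx I J K).min' h) ∩ K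
  else ∅

lemma flowerF_goodSplit (I : Finset V) (J : Fin k → Finset V) (K : Finset V)
    (h : (flowerIdx I J K).Nonempty) :
    goodSplit (flowerF I J) K = flowerParts I J ((flowerIdx I J K).min' h) ∩ K := by
  set s := (flowerIdx I J K).min' h with hs
  obtain ⟨hne, hnsub⟩ := (mem_filter.mp (min'_mem _ h)).2
  have hf : flowerF I J K = flowerParts I J s ∩ K := by
    rw [flowerF, dif_pos h]
  have hprop : flowerParts I J s ∩ K ⊂ K := by
    refine ssubset_of_subset_of_ne inter_subset_right fun he => hnsub ?_
    intro v hv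
    have hv2 : v ∈ flowerParts I J s ∩ K := by rw [he]; exact hv
    exact (mem_inter.mp hv2).1
  rw [goodSplit_eq _ _ (hf ▸ hne) (hf ▸ hprop), hf]

end Flower

section Claims
variable {V : Type} [Fintype V] [DecidableEq V] {k : ℕ}

lemma flower_claim1 (I : Finset V) (J : Fin k → Finset V) (E : Finset (Finset V))
    (hE : ∀ e ∈ E, e.Nonempty) {w : Finset V → ℝ}
    (hw : w ∈ relax (mkRecLin (flowerF I J) E hE)) :
    ∀ n : ℕ, ∀ K ∈ mkNodes (flowerF I J) E, K.card ≤ n →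
      ∀ t : Fin k, (flowerParts I J t).Nonempty → flowerParts I J t ⊆ K →
        w K ≤ w (flowerParts I J t) := by
  intro n
  induction n with
  | zero =>
    intro K hK hc t hPt hsub
    exfalso
    have h1 : 1 ≤ K.card := card_pos.2 (hPt.mono hsub)
    omega
  | succ n ih =>
    intro K hK hc t hPt hsub
    by_cases heq : K = flowerParts I J t
    · rw [heq]
    · have hss : flowerParts I J t ⊂ K := ssubset_of_subset_of_ne hsub (fun h => heq h.symm)
      have h2 : 2 ≤ K.card := by
        have := card_lt_card hss
        have := card_pos.2 hPt
        omega
      have hTne : (flowerIdx I J K).Nonempty := by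
        refine ⟨t, mem_filter.2 ⟨mem_univ t, ⟨?_, ?_⟩⟩⟩
        · rw [inter_eq_left.2 hsub]; exact hPt
        · exact fun hKP => heq (subset_antisymm hKP hsub)
      set s := (flowerIdx I J K).min' hTne with hsdef
      have hfK := flowerF_goodSplit I J K hTne
      rw [← hsdef] at hfK
      obtain ⟨hsne, hsnsub⟩ := (mem_filter.mp (min'_mem _ hTne)).2
      obtain ⟨c1node, c2node⟩ := mkNodes_closed (flowerF I J) hK h2
      obtain ⟨harc1, harc2, _⟩ := relax_facts (flowerF I J) E hE hw hK h2
      by_cases hst : s = t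
      · rw [hfK, hst, inter_eq_left.2 hsub] at harc1
        exact harc1
      · have hdisj := flowerParts_disj I J hst
        have hsub2 : flowerParts I J t ⊆ K \ goodSplit (flowerF I J) K := by
          intro v hv
          rw [hfK, mem_sdiff, mem_inter]
          refine ⟨hsub hv, fun hc => ?_⟩
          have : v ∈ flowerParts I J s ∩ flowerParts I J t := mem_inter.2 ⟨hc.1, hv⟩
          rw [hdisj] at this
          exact notMem_empty v this
        have hcard : (K \ goodSplit (flowerF I J) K).card ≤ n := by
          have := card_sdiff_goodSplit_lt (flowerF I J) K h2
          omega
        exact le_trans harc2 (ih _ c2node hcard t hPt hsub2)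

lemma flower_claim2 (I : Finset V) (J : Fin k → Finset V) (E : Finset (Finset V))
    (hE : ∀ e ∈ E, e.Nonempty) (hcover : I ⊆ Finset.univ.biUnion J)
    {w : Finset V → ℝ}
    (hw : w ∈ relax (mkRecLin (flowerF I J) E hE)) :
    ∀ n : ℕ, ∀ K ∈ mkNodes (flowerF I J) E, K.card ≤ n → K.Nonempty → K ⊆ I →
      (∀ t, (flowerParts I J t ∩ K).Nonempty → flowerParts I J t ⊆ K) →
      1 ≤ w K + ∑ t ∈ univ.filter (fun t => (flowerParts I J t ∩ K).Nonempty),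
        (1 - w (flowerParts I J t)) := by
  intro n
  induction n with
  | zero =>
    intro K hK hc hne hKI hparts
    exfalso
    have := card_pos.2 hne
    omega
  | succ n ih =>
    intro K hK hc hne hKI hparts
    by_cases hA : ∃ t, K ⊆ flowerParts I J t
    · obtain ⟨t, ht⟩ := hA
      have hPtK : flowerParts I J t ∩ K = K := inter_eq_right.2 ht
      have hKPt : K = flowerParts I J t := by
        refine subset_antisymm ht (hparts t ?_)
        rw [hPtK]; exact hne
      have hfilter : univ.filter (fun r => (flowerParts I J r ∩ K).Nonempty) = {t} := by
        ext r
        rw [mem_filter, mem_singleton]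
        constructor
        · rintro ⟨-, hr⟩
          by_contra hrt
          have hd := flowerParts_disj I J hrt
          obtain ⟨v, hv⟩ := hr
          rw [mem_inter, hKPt] at hv
          have : v ∈ flowerParts I J r ∩ flowerParts I J t := mem_inter.2 hv
          rw [hd] at this
          exact notMem_empty v this
        · rintro rfl
          refine ⟨mem_univ _, ?_⟩
          rw [hPtK]; exact hne
      rw [hfilter, sum_singleton, ← hKPt]
      linarith
    · push_neg at hA
      -- the index set is nonempty
      obtain ⟨v, hvK⟩ := hne
      obtain ⟨t0, hvt0⟩ := flowerParts_cover I J hcover (hKI hvK)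
      have hTne : (flowerIdx I J K).Nonempty :=
        ⟨t0, mem_filter.2 ⟨mem_univ t0, ⟨⟨v, mem_inter.2 ⟨hvt0, hvK⟩⟩, hA t0⟩⟩⟩
      set s := (flowerIdx I J K).min' hTne with hsdef
      have hfK := flowerF_goodSplit I J K hTne
      rw [← hsdef] at hfK
      obtain ⟨hsne, hsnsub⟩ := (mem_filter.mp (min'_mem _ hTne)).2
      have hPsK : flowerParts I J s ⊆ K := hparts s hsne
      have hfK' : goodSplit (flowerF I J) K = flowerParts I J s := by
        rw [hfK, inter_eq_left.2 hPsK]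
      have h2 : 2 ≤ K.card := by
        have hx : ∃ x ∈ K, x ∉ flowerParts I J s := not_subset.mp hsnsub
        obtain ⟨x, hxK, hxP⟩ := hx
        obtain ⟨y, hy⟩ := hsne
        rw [mem_inter] at hy
        refine one_lt_card.2 ⟨x, hxK, y, hy.2, fun hxy => hxP (hxy ▸ hy.1)⟩
      obtain ⟨c1node, c2node⟩ := mkNodes_closed (flowerF I J) hK h2
      obtain ⟨harc1, harc2, hnode⟩ := relax_facts (flowerF I J) E hE hw hK h2
      set c2 := K \ goodSplit (flowerF I J) K with hc2def
      have hc2 : c2 = K \ flowerParts I J s := by rw [hc2def, hfK']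
      -- c2 properties
      have hc2ne : c2.Nonempty := by
        obtain ⟨x, hxK, hxP⟩ := not_subset.mp hsnsub
        exact ⟨x, by rw [hc2]; exact mem_sdiff.2 ⟨hxK, hxP⟩⟩
      have hc2I : c2 ⊆ I := (sdiff_subset).trans hKI
      have hc2card : c2.card ≤ n := by
        have h3 := card_sdiff_goodSplit_lt (flowerF I J) K h2
        rw [← hc2def] at h3
        omega
      have hc2parts : ∀ r, (flowerParts I J r ∩ c2).Nonempty → flowerParts I J r ⊆ c2 := by
        intro r hr
        obtain ⟨x, hx⟩ := hr
        rw [mem_inter, hc2, mem_sdiff] at hx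
        have hrs : r ≠ s := fun h => hx.2.2 (h ▸ hx.1)
        have hrK : flowerParts I J r ⊆ K := hparts r ⟨x, mem_inter.2 ⟨hx.1, hx.2.1⟩⟩
        intro y hy
        rw [hc2, mem_sdiff]
        refine ⟨hrK hy, fun hc => ?_⟩
        have : y ∈ flowerParts I J r ∩ flowerParts I J s := mem_inter.2 ⟨hy, hc⟩
        rw [flowerParts_disj I J hrs] at this
        exact notMem_empty y this
      -- index set splits
      have hidx : univ.filter (fun r => (flowerParts I J r ∩ K).Nonempty)
          = insert s (univ.filter (fun r => (flowerParts I J r ∩ c2).Nonempty)) := by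
        ext r
        rw [mem_filter, mem_insert, mem_filter]
        constructor
        · rintro ⟨-, hr⟩
          by_cases hrs : r = s
          · exact Or.inl hrs
          · right
            refine ⟨mem_univ r, ?_⟩
            have hrK : flowerParts I J r ⊆ K := hparts r hr
            obtain ⟨x, hx⟩ := hr
            rw [mem_inter] at hx
            refine ⟨x, mem_inter.2 ⟨hx.1, ?_⟩⟩
            rw [hc2, mem_sdiff]
            refine ⟨hx.2, fun hc => ?_⟩
            have : x ∈ flowerParts I J r ∩ flowerParts I J s := mem_inter.2 ⟨hx.1, hc⟩
            rw [flowerParts_disj I J hrs] at this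
            exact notMem_empty x this
        · rintro (rfl | ⟨-, hr⟩)
          · exact ⟨mem_univ _, hsne⟩
          · exact ⟨mem_univ _, hr.mono (inter_subset_inter Subset.rfl (by rw [hc2]; exact sdiff_subset))⟩
      have hsnotmem : s ∉ univ.filter (fun r => (flowerParts I J r ∩ c2).Nonempty) := by
        rw [mem_filter]
        rintro ⟨-, x, hx⟩
        rw [mem_inter, hc2, mem_sdiff] at hx
        exact hx.2.2 hx.1
      have hih := ih c2 c2node hc2card hc2ne hc2I hc2parts
      rw [hidx, sum_insert hsnotmem]
      rw [hfK'] at hnode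
      linarith

end Claims

/-- for every extended flower inequality (no non-redundancy assumption)
there is a recursive McCormick linearization of `G` whose projected relaxation
implies it. -/
theorem mccormick_implies_flower {V : Type} [Fintype V] [DecidableEq V]
    (E : Finset (Finset V)) (hE : ∀ I ∈ E, 2 ≤ I.card)
    (I : Finset V) (hI : I ∈ E)
    (k : ℕ) (J : Fin k → Finset V)
    (hJmem : ∀ i, J i ∈ E ∨ IsSingleton (J i))
    (hcover : I ⊆ Finset.univ.biUnion J)
    (hinter : ∀ i, (J i ∩ I).Nonempty) :
    ∃ D : RecLin V, RecLinOf D E ∧ McCormick D ∧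
      ∀ z ∈ projRelax D E, z I + ∑ i, (1 - z (J i)) ≥ 1 := by
  have hE' : ∀ e ∈ E, e.Nonempty := fun e he => card_pos.mp (by have := hE e he; omega)
  refine ⟨mkRecLin (flowerF I J) E hE', mkRecLin_of _ E hE', mkRecLin_mccormick _ E hE', ?_⟩
  rintro z ⟨w, hw, hproj⟩
  have hInode : I ∈ mkNodes (flowerF I J) E := mem_mkNodes_of_E _ hI
  have hmain := flower_claim2 I J E hE' hcover hw I.card I hInode le_rfl
    (card_pos.mp (by have := hE I hI; omega)) Subset.rfl
    (fun t _ => flowerParts_subset_I I J t)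
  have hJnode : ∀ i, J i ∈ mkNodes (flowerF I J) E := by
    intro i
    rcases hJmem i with h | ⟨v, hv⟩
    · exact mem_mkNodes_of_E _ h
    · rw [hv]; exact singleton_mem_mkNodes _ E v
  have hbd := hw.1
  have hJle : ∀ i, w (J i) ≤ 1 := fun i => (hbd _ (hJnode i)).2
  have hsum1 : ∑ t ∈ univ.filter (fun t => (flowerParts I J t ∩ I).Nonempty),
        (1 - w (flowerParts I J t))
      ≤ ∑ t ∈ univ.filter (fun t => (flowerParts I J t ∩ I).Nonempty), (1 - w (J t)) := by
    refine sum_le_sum fun t ht => ?_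
    have hne : (flowerParts I J t).Nonempty := by
      obtain ⟨x, hx⟩ := (mem_filter.mp ht).2
      exact ⟨x, (mem_inter.mp hx).1⟩
    have := flower_claim1 I J E hE' hw (J t).card (J t) (hJnode t) le_rfl t hne
      (flowerParts_subset_J I J t)
    linarith
  have hsum2 : ∑ t ∈ univ.filter (fun t => (flowerParts I J t ∩ I).Nonempty), (1 - w (J t))
      ≤ ∑ i, (1 - w (J i)) :=
    sum_le_sum_of_subset_of_nonneg (filter_subset _ _) fun i _ _ => by linarith [hJle i]
  have hzI : w I = z I := hproj I (Or.inl hI)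
  have hzJ : ∑ i, (1 - w (J i)) = ∑ i, (1 - z (J i)) :=
    Finset.sum_congr rfl fun i _ => by rw [hproj (J i) (hJmem i)]
  rw [ge_iff_le, ← hzI, ← hzJ]
  linarith
end
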